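/- arXiv:1511.00788 — 4 statements merged into one kernel-verified Lean document; each statement's English description precedes it below -/
import Mathlib

section
/- Let A and B be associative rings with identity, f : A → B a ring homomorphism, and J a proper two-sided ideal of B. Assume f⁻¹(J) ∩ nil(A) = {0}, i.e., the only nilpotent element of A mapped into J by f is 0. If the subring f(A)+J of B is an Armendariz ring, then the amalgamation A⋈fJ is an Armendariz ring. -/
open Polynomial

/-- A ring `R` is Armendariz if whenever `p * q = 0` for polynomials over `R`,
every product of a coefficient of `p` with a coefficient of `q` is zero. -/
def IsArmendariz (R : Type*) [Ring R] : Prop :=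
  ∀ p q : R[X], p * q = 0 → ∀ i j : ℕ, p.coeff i * q.coeff j = 0

/-- A ring `R` is nil-Armendariz if whenever every coefficient of `p * q` is nilpotent,
every product of a coefficient of `p` with a coefficient of `q` is nilpotent. -/
def IsNilArmendariz (R : Type*) [Ring R] : Prop :=
  ∀ p q : R[X], (∀ k : ℕ, IsNilpotent ((p * q).coeff k)) →
    ∀ i j : ℕ, IsNilpotent (p.coeff i * q.coeff j)

/-- A ring `R` is weak Armendariz if whenever `p * q = 0` for polynomials over `R`,
every product of a coefficient of `p` with a coefficient of `q` is nilpotent. -/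
def IsWeakArmendariz (R : Type*) [Ring R] : Prop :=
  ∀ p q : R[X], p * q = 0 → ∀ i j : ℕ, IsNilpotent (p.coeff i * q.coeff j)

/-- The amalgamation `A ⋈^f J = {(a, f a + j) | a ∈ A, j ∈ J}` of `A` and `B` along the
two-sided ideal `J` with respect to `f`, as a subring of `A × B`.  (A pair `(a, b)` has the
form `(a, f a + j)` with `j ∈ J` iff `b - f a ∈ J`.) -/
def amalgamation {A B : Type*} [Ring A] [Ring B] (f : A →+* B) (J : TwoSidedIdeal B) :
    Subring (A × B) where
  carrier := {p | p.2 - f p.1 ∈ J}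
  zero_mem' := by simp [J.zero_mem]
  one_mem' := by simp [J.zero_mem]
  add_mem' := by
    intro x y hx hy
    have e : (x + y).2 - f ((x + y).1) = (x.2 - f x.1) + (y.2 - f y.1) := by
      simp only [Prod.snd_add, Prod.fst_add, map_add]; abel
    show (x + y).2 - f ((x + y).1) ∈ J
    rw [e]; exact J.add_mem hx hy
  neg_mem' := by
    intro x hx
    have e : (-x).2 - f ((-x).1) = -(x.2 - f x.1) := by
      simp only [Prod.snd_neg, Prod.fst_neg, map_neg]; abel
    show (-x).2 - f ((-x).1) ∈ J
    rw [e]; exact J.neg_mem hx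
  mul_mem' := by
    intro x y hx hy
    have e : (x * y).2 - f ((x * y).1) = x.2 * (y.2 - f y.1) + (x.2 - f x.1) * f y.1 := by
      simp only [Prod.snd_mul, Prod.fst_mul, map_mul, mul_sub, sub_mul]; abel
    show (x * y).2 - f ((x * y).1) ∈ J
    rw [e]; exact J.add_mem (J.mul_mem_left _ _ hy) (J.mul_mem_right _ _ hx)

/-- The subring `f(A) + J = {f a + j | a ∈ A, j ∈ J}` of `B`.  (An element `b` has the form
`f a + j` with `j ∈ J` iff `b - f a ∈ J` for some `a`.) -/
def imageAddIdeal {A B : Type*} [Ring A] [Ring B] (f : A →+* B) (J : TwoSidedIdeal B) :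
    Subring B where
  carrier := {b | ∃ a : A, b - f a ∈ J}
  zero_mem' := ⟨0, by simp [J.zero_mem]⟩
  one_mem' := ⟨1, by simp [J.zero_mem]⟩
  add_mem' := by
    rintro x y ⟨a, ha⟩ ⟨b, hb⟩
    refine ⟨a + b, ?_⟩
    have e : x + y - f (a + b) = (x - f a) + (y - f b) := by
      rw [map_add]; abel
    rw [e]; exact J.add_mem ha hb
  neg_mem' := by
    rintro x ⟨a, ha⟩
    refine ⟨-a, ?_⟩
    have e : -x - f (-a) = -(x - f a) := by rw [map_neg]; abel
    rw [e]; exact J.neg_mem ha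
  mul_mem' := by
    rintro x y ⟨a, ha⟩ ⟨b, hb⟩
    refine ⟨a * b, ?_⟩
    have e : x * y - f (a * b) = x * (y - f b) + (x - f a) * f b := by
      rw [map_mul, mul_sub, sub_mul]; abel
    rw [e]; exact J.add_mem (J.mul_mem_left _ _ hb) (J.mul_mem_right _ _ ha)

/-!
Project a vanishing product `P * Q` over `A ⋈^f J` to `f(A) + J` and to `A`. The first projection
kills all products of second coordinates, since `f(A) + J` is Armendariz. In `A` the products
`aᵢ bⱼ` of first coordinates then lie in the ideal `f⁻¹(J)`, and an ideal without nonzero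
square-zero elements forces them to vanish: ordering the products of degree `k` by the index
of `b`, multiplying the degree-`k` coefficient of `P * Q` by `aᵢ bⱼ` leaves only `(aᵢ bⱼ)²`.
-/

namespace TwoSidedIdeal

open Finset.HasAntidiagonal

variable {R : Type*} [Ring R] {I : TwoSidedIdeal R}

theorem mul_eq_zero_symm_of_mem (hI : ∀ z ∈ I, z * z = 0 → z = 0) {z y : R} (hz : z ∈ I)
    (h : z * y = 0) : y * z = 0 :=
  hI _ (I.mul_mem_left y z hz) (by rw [mul_assoc, ← mul_assoc z, h, zero_mul, mul_zero])

theorem mul_mul_mul_eq_zero_of_mul_eq_zero (hI : ∀ z ∈ I, z * z = 0 → z = 0) {a b a' b' : R}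
    (hab : a * b ∈ I) (h : a' * b = 0) : a * b * (a' * b') = 0 := by
  have hZ : b * (a' * b' * (a * b) * a') = 0 :=
    mul_eq_zero_symm_of_mem hI (I.mul_mem_right _ a' (I.mul_mem_left (a' * b') _ hab)) <| by
      rw [mul_assoc _ a', h, mul_zero]
  refine hI _ (I.mul_mem_right _ _ hab) ?_
  calc a * b * (a' * b') * (a * b * (a' * b'))
      = a * (b * (a' * b' * (a * b) * a')) * b' := by simp only [mul_assoc]
    _ = 0 := by rw [hZ, mul_zero, zero_mul]

theorem coeff_mul_coeff_eq_zero_of_add_eq (hI : ∀ z ∈ I, z * z = 0 → z = 0)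
    {p q : R[X]} (hpq : p * q = 0) (hmem : ∀ i j, p.coeff i * q.coeff j ∈ I) {k : ℕ}
    (hlow : ∀ i j, i + j < k → p.coeff i * q.coeff j = 0) :
    ∀ i j, i + j = k → p.coeff i * q.coeff j = 0 := by
  intro i
  induction i using Nat.strong_induction_on with
  | _ i ih =>
    intro j hij
    have hsum : ∑ x ∈ antidiagonal k,
        p.coeff x.1 * q.coeff x.2 * (p.coeff i * q.coeff j)
          = p.coeff i * q.coeff j * (p.coeff i * q.coeff j) := by
      refine Finset.sum_eq_single (i, j) ?_ (fun h ↦ absurd (by simpa using hij) h)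
      rintro ⟨u, v⟩ huv hne
      rw [mem_antidiagonal] at huv
      rcases lt_trichotomy v j with hv | rfl | hv
      · exact mul_mul_mul_eq_zero_of_mul_eq_zero hI (hmem u v) (hlow i v (by omega))
      · exact absurd (by simp only [show u = i by omega]) hne
      · rw [ih u (by omega) v huv, zero_mul]
    refine hI _ (hmem i j) ?_
    rw [← hsum, ← Finset.sum_mul, ← coeff_mul, hpq, coeff_zero, zero_mul]

theorem coeff_mul_coeff_eq_zero (hI : ∀ z ∈ I, z * z = 0 → z = 0) {p q : R[X]}
    (hpq : p * q = 0) (hmem : ∀ i j, p.coeff i * q.coeff j ∈ I) (i j : ℕ) :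
    p.coeff i * q.coeff j = 0 := by
  induction h : i + j using Nat.strong_induction_on generalizing i j with
  | _ k ih =>
    exact coeff_mul_coeff_eq_zero_of_add_eq hI hpq hmem
      (fun i' j' hk ↦ ih _ hk i' j' rfl) i j h

end TwoSidedIdeal

theorem IsArmendariz.map_coeff_mul_coeff_eq_zero {R S : Type*} [Ring R] [Ring S]
    (hS : IsArmendariz S) (φ : R →+* S) {p q : R[X]} (hpq : p * q = 0) (i j : ℕ) :
    φ (p.coeff i * q.coeff j) = 0 := by
  simpa only [map_mul, coeff_map] using
    hS (p.map φ) (q.map φ) (by rw [← Polynomial.map_mul, hpq, Polynomial.map_zero]) i j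

namespace amalgamation

variable {A B : Type*} [Ring A] [Ring B] (f : A →+* B) (J : TwoSidedIdeal B)

def fst : amalgamation f J →+* A :=
  (RingHom.fst A B).comp (amalgamation f J).subtype

def toImageAddIdeal : amalgamation f J →+* imageAddIdeal f J where
  toFun x := ⟨x.1.2, ⟨x.1.1, x.2⟩⟩
  map_one' := rfl
  map_mul' _ _ := rfl
  map_zero' := rfl
  map_add' _ _ := rfl

variable {f J}

theorem map_fst_mul_mem_of_snd_mul_eq_zero {x y : amalgamation f J}
    (h : (x : A × B).2 * (y : A × B).2 = 0) : f (fst f J (x * y)) ∈ J := by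
  obtain ⟨⟨a, b⟩, hx : b - f a ∈ J⟩ := x
  obtain ⟨⟨a', b'⟩, hy : b' - f a' ∈ J⟩ := y
  have e : f (a * a') = b * b' - b * (b' - f a') - (b - f a) * f a' := by
    rw [map_mul]; noncomm_ring
  change f (a * a') ∈ J
  rw [e, show b * b' = 0 from h]
  exact J.sub_mem (J.sub_mem J.zero_mem (J.mul_mem_left _ _ hy)) (J.mul_mem_right _ _ hx)

end amalgamation

open amalgamation in
theorem stmt_4_general {A B : Type*} [Ring A] [Ring B] (f : A →+* B) (J : TwoSidedIdeal B)
    (h : ∀ a : A, f a ∈ J → IsNilpotent a → a = 0)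
    (hB : IsArmendariz (imageAddIdeal f J)) :
    IsArmendariz (amalgamation f J) := by
  intro P Q hPQ
  have hsnd (i j : ℕ) : (P.coeff i : A × B).2 * (Q.coeff j : A × B).2 = 0 :=
    congrArg Subtype.val (hB.map_coeff_mul_coeff_eq_zero (toImageAddIdeal f J) hPQ i j)
  have hI : ∀ z ∈ J.comap f, z * z = 0 → z = 0 := fun z hz hzz ↦
    h z ((TwoSidedIdeal.mem_comap f).mp hz) ⟨2, by rwa [pow_two]⟩
  have hfst := TwoSidedIdeal.coeff_mul_coeff_eq_zero hI
    (p := P.map (fst f J)) (q := Q.map (fst f J))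
    (by rw [← Polynomial.map_mul, hPQ, Polynomial.map_zero])
    (fun i j ↦ by
      rw [coeff_map, coeff_map, ← map_mul, TwoSidedIdeal.mem_comap]
      exact map_fst_mul_mem_of_snd_mul_eq_zero (hsnd i j))
  simp only [coeff_map] at hfst
  exact fun i j ↦ Subtype.ext (Prod.ext (hfst i j) (hsnd i j))

theorem stmt_4 {A B : Type*} [Ring A] [Ring B] (f : A →+* B) (J : TwoSidedIdeal B)
    (hJ : (1 : B) ∉ J)
    (h : ∀ a : A, f a ∈ J → IsNilpotent a → a = 0)
    (hB : IsArmendariz (imageAddIdeal f J)) :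
    IsArmendariz (amalgamation f J) :=
  stmt_4_general f J h hB
end

section
/- Let A and B be associative rings with identity, f : A → B a ring homomorphism, and J a proper two-sided ideal of B. Assume J contains a regular central element of B. Then the amalgamation A⋈fJ is a nil-Armendariz ring if and only if both A and the subring f(A)+J of B are nil-Armendariz rings. -/
open Polynomial

/-!
Nil-Armendariz rings pass to subrings and to finite products. Since `A ⋈ J` is a subring of
`A × (f(A) + J)` and contains a copy `a ↦ (a, f a)` of `A`, everything follows except that
`f(A) + J` inherits the property from `A ⋈ J`. For that, let `s ∈ J` be regular and central.
The additive map `b ↦ (0, s b)` from `B` into `A ⋈ J` satisfies `(0, s b) (0, s c) = (0, s² b c)`,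
and multiplication by `s²` both preserves and reflects nilpotency. So a polynomial test in `B`
transports to one in `A ⋈ J`: all of `B` is nil-Armendariz, and hence so is its subring `f(A) + J`.
-/

open Function

lemma Prod.isNilpotent_iff {R S : Type*} [MonoidWithZero R] [MonoidWithZero S] {x : R × S} :
    IsNilpotent x ↔ IsNilpotent x.1 ∧ IsNilpotent x.2 := by
  constructor
  · rintro ⟨n, hn⟩
    exact ⟨⟨n, by rw [← Prod.pow_fst, hn, Prod.fst_zero]⟩,
      ⟨n, by rw [← Prod.pow_snd, hn, Prod.snd_zero]⟩⟩
  · rintro ⟨⟨n, hn⟩, ⟨m, hm⟩⟩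
    refine ⟨n + m, Prod.ext ?_ ?_⟩
    · rw [Prod.pow_fst, pow_add, hn, zero_mul, Prod.fst_zero]
    · rw [Prod.pow_snd, pow_add, hm, mul_zero, Prod.snd_zero]

lemma Commute.isNilpotent_mul_left_iff_of_isLeftRegular {R : Type*} [MonoidWithZero R] {c x : R}
    (hcx : Commute c x) (hc : IsLeftRegular c) : IsNilpotent (c * x) ↔ IsNilpotent x := by
  refine ⟨fun ⟨n, hn⟩ => ⟨n, (hc.pow n) ?_⟩, fun ⟨n, hn⟩ => ⟨n, ?_⟩⟩
  · change c ^ n * x ^ n = c ^ n * 0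
    rw [← hcx.mul_pow, hn, mul_zero]
  · rw [hcx.mul_pow, hn, mul_zero]

lemma Polynomial.exists_coeff_eq_map_coeff {R S : Type*} [Semiring R] [Semiring S]
    (φ : R →+ S) (p : R[X]) : ∃ P : S[X], ∀ n, P.coeff n = φ (p.coeff n) := by
  refine ⟨p.sum fun k a => monomial k (φ a), fun n => ?_⟩
  simp only [Polynomial.sum_def, finsetSum_coeff, coeff_monomial, Finset.sum_ite_eq']
  split_ifs with hn
  · rfl
  · rw [notMem_support_iff.mp hn, map_zero]

namespace IsNilArmendariz

variable {R T : Type*} [Ring R] [Ring T]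

lemma of_map_mul_map (hR : IsNilArmendariz R) (φ ψ : T →+ R)
    (hmul : ∀ x y, φ x * φ y = ψ (x * y)) (hψ : ∀ x, IsNilpotent (ψ x) ↔ IsNilpotent x) :
    IsNilArmendariz T := by
  intro p q hpq i j
  obtain ⟨P, hP⟩ := exists_coeff_eq_map_coeff φ p
  obtain ⟨Q, hQ⟩ := exists_coeff_eq_map_coeff φ q
  have hPQ : ∀ k, (P * Q).coeff k = ψ ((p * q).coeff k) := by
    intro k
    simp only [coeff_mul, hP, hQ, hmul, map_sum]
  rw [← hψ, ← hmul, ← hP, ← hQ]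
  exact hR P Q (fun k => by rw [hPQ, hψ]; exact hpq k) i j

lemma of_injective (hT : IsNilArmendariz T) (g : R →+* T) (hg : Injective g) :
    IsNilArmendariz R :=
  hT.of_map_mul_map g g (fun x y => (map_mul g x y).symm) fun _ => IsNilpotent.map_iff (f := g) hg

lemma subring (hR : IsNilArmendariz R) (S : Subring R) : IsNilArmendariz S :=
  hR.of_injective S.subtype Subtype.val_injective

lemma isNilpotent_map_coeff_mul_coeff (hR : IsNilArmendariz R) (π : T →+* R) {p q : T[X]}
    (hpq : ∀ k, IsNilpotent ((p * q).coeff k)) (i j : ℕ) :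
    IsNilpotent (π (p.coeff i * q.coeff j)) := by
  have := hR (p.map π) (q.map π)
    (fun k => by rw [← Polynomial.map_mul, coeff_map]; exact (hpq k).map π) i j
  rwa [coeff_map, coeff_map, ← map_mul] at this

lemma prod (hR : IsNilArmendariz R) (hT : IsNilArmendariz T) : IsNilArmendariz (R × T) :=
  fun _ _ hpq i j => Prod.isNilpotent_iff.mpr
    ⟨hR.isNilpotent_map_coeff_mul_coeff (RingHom.fst R T) hpq i j,
      hT.isNilpotent_map_coeff_mul_coeff (RingHom.snd R T) hpq i j⟩

end IsNilArmendariz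

namespace amalgamation

variable {A B : Type*} [Ring A] [Ring B] (f : A →+* B) (J : TwoSidedIdeal B)

def diag : A →+* amalgamation f J where
  toFun a := ⟨(a, f a), show f a - f a ∈ J by rw [sub_self]; exact J.zero_mem⟩
  map_one' := Subtype.ext (Prod.ext rfl (map_one f))
  map_mul' x y := Subtype.ext (Prod.ext rfl (map_mul f x y))
  map_zero' := Subtype.ext (Prod.ext rfl (map_zero f))
  map_add' x y := Subtype.ext (Prod.ext rfl (map_add f x y))

lemma diag_injective : Injective (diag f J) :=
  fun _ _ h => congrArg (fun z : amalgamation f J => (z : A × B).1) h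

def toProd : amalgamation f J →+* A × imageAddIdeal f J where
  toFun x := ((x : A × B).1, ⟨(x : A × B).2, (x : A × B).1, x.2⟩)
  map_one' := rfl
  map_mul' _ _ := rfl
  map_zero' := rfl
  map_add' _ _ := rfl

lemma toProd_injective : Injective (toProd f J) := fun _ _ h =>
  Subtype.ext (Prod.ext (congrArg (fun z => z.1) h) (congrArg (fun z => (z.2 : B)) h))

def mulLeft {s : B} (hs : s ∈ J) : B →+ amalgamation f J where
  toFun b := ⟨(0, s * b), show s * b - f 0 ∈ J by
    rw [map_zero, sub_zero]; exact J.mul_mem_right s b hs⟩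
  map_zero' := Subtype.ext (Prod.ext rfl (mul_zero s))
  map_add' x y := Subtype.ext (Prod.ext (zero_add 0).symm (mul_add s x y))

lemma mulLeft_mul_mulLeft {s : B} (hs : s ∈ J) (hcomm : ∀ b, Commute s b) (b c : B) :
    mulLeft f J hs b * mulLeft f J hs c = mulLeft f J (J.mul_mem_right s s hs) (b * c) := by
  refine Subtype.ext (Prod.ext (mul_zero 0) ?_)
  change s * b * (s * c) = s * s * (b * c)
  rw [mul_assoc, ← mul_assoc b, ← (hcomm b).eq, mul_assoc, mul_assoc]

lemma isNilpotent_mulLeft_iff {s : B} (hs : s ∈ J) (hcomm : ∀ b, Commute s b)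
    (hreg : IsLeftRegular s) (b : B) : IsNilpotent (mulLeft f J hs b) ↔ IsNilpotent b := by
  rw [← IsNilpotent.map_iff (f := (amalgamation f J).subtype) Subtype.val_injective,
    Prod.isNilpotent_iff]
  exact (and_iff_right IsNilpotent.zero).trans
    (Commute.isNilpotent_mul_left_iff_of_isLeftRegular (hcomm b) hreg)

end amalgamation

open amalgamation in
theorem stmt_7_general {A B : Type*} [Ring A] [Ring B] (f : A →+* B) (J : TwoSidedIdeal B)
    (hs : ∃ s ∈ J, (∀ b : B, s * b = b * s) ∧
      (∀ b : B, s * b = 0 → b = 0) ∧ (∀ b : B, b * s = 0 → b = 0)) :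
    IsNilArmendariz (amalgamation f J) ↔ IsNilArmendariz A ∧ IsNilArmendariz (imageAddIdeal f J) := by
  obtain ⟨s, hsJ, hcomm, hreg, -⟩ := hs
  replace hcomm : ∀ b, Commute s b := hcomm
  replace hreg : IsLeftRegular s := isLeftRegular_iff_right_eq_zero_of_mul.mpr hreg
  refine ⟨fun hR => ⟨hR.of_injective (diag f J) (diag_injective f J), ?_⟩,
    fun ⟨hA, hS⟩ => (hA.prod hS).of_injective (toProd f J) (toProd_injective f J)⟩
  have hB : IsNilArmendariz B :=
    hR.of_map_mul_map (mulLeft f J hsJ) (mulLeft f J (J.mul_mem_right s s hsJ))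
      (mulLeft_mul_mulLeft f J hsJ hcomm)
      (isNilpotent_mulLeft_iff f J _ (fun b => ((hcomm b).mul_left (hcomm b)))
        (hreg.mul hreg))
  exact hB.subring (imageAddIdeal f J)

theorem stmt_7 {A B : Type*} [Ring A] [Ring B] (f : A →+* B) (J : TwoSidedIdeal B)
    (hJ : (1 : B) ∉ J)
    (hs : ∃ s ∈ J, (∀ b : B, s * b = b * s) ∧
      (∀ b : B, s * b = 0 → b = 0) ∧ (∀ b : B, b * s = 0 → b = 0)) :
    IsNilArmendariz (amalgamation f J) ↔ IsNilArmendariz A ∧ IsNilArmendariz (imageAddIdeal f J) :=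
  stmt_7_general f J hs
end

section
/- Let A and B be associative rings with identity, f : A → B a ring homomorphism, and J a proper two-sided ideal of B. Assume f⁻¹(J) ⊆ nil(A), i.e., every element of A mapped into J by f is nilpotent. If the subring f(A)+J of B is a weak Armendariz ring, then the amalgamation A⋈fJ is a weak Armendariz ring. -/
/-!
Projecting `A ⋈^f J` onto its second coordinate is a ring map into `f(A) + J` that reflects
nilpotency: if `b ^ n = 0` for `(a, b) ∈ A ⋈^f J`, then `(a ^ n, b ^ n) ∈ A ⋈^f J` gives
`f (a ^ n) ∈ J`, so `a` is nilpotent. Weak Armendariz rings pull back along such maps,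
because the coefficients of the image of a polynomial are the images of its coefficients.
-/

open Polynomial

theorem IsWeakArmendariz.of_ringHom {R S : Type*} [Ring R] [Ring S] (g : R →+* S)
    (hg : ∀ x, IsNilpotent (g x) → IsNilpotent x) (hS : IsWeakArmendariz S) :
    IsWeakArmendariz R := by
  intro p q hpq i j
  apply hg
  have hmap : p.map g * q.map g = 0 := by rw [← Polynomial.map_mul, hpq, Polynomial.map_zero]
  simpa only [coeff_map, map_mul] using hS _ _ hmap i j

theorem Prod.isNilpotent_mk {R S : Type*} [MonoidWithZero R] [MonoidWithZero S] {a : R} {b : S}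
    (ha : IsNilpotent a) (hb : IsNilpotent b) : IsNilpotent (a, b) := by
  obtain ⟨m, hm⟩ := ha
  obtain ⟨n, hn⟩ := hb
  exact ⟨m + n, by simp [pow_add, hm, hn]⟩

namespace amalgamation

variable {A B : Type*} [Ring A] [Ring B] {f : A →+* B} {J : TwoSidedIdeal B}

variable (f J) in
def sndHom : amalgamation f J →+* imageAddIdeal f J where
  toFun x := ⟨(x : A × B).2, (x : A × B).1, x.2⟩
  map_one' := rfl
  map_mul' _ _ := rfl
  map_zero' := rfl
  map_add' _ _ := rfl

theorem map_fst_pow_mem {x : A × B} (hx : x ∈ amalgamation f J) {n : ℕ} (hn : x.2 ^ n = 0) :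
    f (x.1 ^ n) ∈ J := by
  have hxn : (x ^ n).2 - f (x ^ n).1 ∈ J := pow_mem hx n
  simpa [hn] using hxn

theorem isNilpotent_of_isNilpotent_sndHom (h : ∀ a : A, f a ∈ J → IsNilpotent a)
    (x : amalgamation f J) (hx : IsNilpotent (sndHom f J x)) : IsNilpotent x := by
  have hx2 : IsNilpotent (x : A × B).2 := hx.map (imageAddIdeal f J).subtype
  obtain ⟨n, hn⟩ := hx2
  have hx1 : IsNilpotent (x : A × B).1 := (h _ (map_fst_pow_mem x.2 hn)).of_pow
  rw [← IsNilpotent.map_iff (f := (amalgamation f J).subtype) Subtype.coe_injective]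
  exact Prod.isNilpotent_mk hx1 ⟨n, hn⟩

end amalgamation

theorem stmt_16_general {A B : Type*} [Ring A] [Ring B] (f : A →+* B) (J : TwoSidedIdeal B)
    (h : ∀ a : A, f a ∈ J → IsNilpotent a)
    (hB : IsWeakArmendariz (imageAddIdeal f J)) :
    IsWeakArmendariz (amalgamation f J) :=
  IsWeakArmendariz.of_ringHom (amalgamation.sndHom f J)
    (amalgamation.isNilpotent_of_isNilpotent_sndHom h) hB

theorem stmt_16 {A B : Type*} [Ring A] [Ring B] (f : A →+* B) (J : TwoSidedIdeal B)
    (hJ : (1 : B) ∉ J)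
    (h : ∀ a : A, f a ∈ J → IsNilpotent a)
    (hB : IsWeakArmendariz (imageAddIdeal f J)) :
    IsWeakArmendariz (amalgamation f J) :=
  stmt_16_general f J h hB
end

section
/- Let A and B be associative rings with identity, f : A → B a ring homomorphism, and J a proper two-sided ideal of B. Assume J is semicommutative, i.e., for all a, b ∈ J, ab = 0 implies aJb = 0. If A is a weak Armendariz ring, then the amalgamation A⋈fJ is a weak Armendariz ring. -/
open Polynomial

/-!
Projecting to `A`, the products of coefficients of `p` and `q` become nilpotent; projecting to
`B` gives `P * Q = 0` in `B[X]` with every `t = Pᵢ * Qⱼ` satisfying `t ^ m ∈ J` for some `m`.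
Semicommutativity makes the nilpotent elements of `J` a two-sided ideal `N` of `B` (a product of
elements of `J` with at least `m` factors equal to some `x` with `x ^ m = 0` vanishes), and modulo
`N` the ideal `J` has no nonzero element of square zero. Polynomials with coefficients in such a
set satisfy the Armendariz condition, by the classical leading-coefficient argument. Applied to
`tᵐ P` and `Q tᵐ` modulo `N`, it gives `t ^ (2m + 1) ∈ N`, so `t` is nilpotent.
-/

theorem isNilpotent_mul_comm {M : Type*} [MonoidWithZero M] {a b : M}
    (h : IsNilpotent (a * b)) : IsNilpotent (b * a) := by
  obtain ⟨n, hn⟩ := h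
  exact ⟨n + 1, by rw [pow_succ, ← mul_assoc, mul_pow_mul, hn, mul_zero, zero_mul]⟩

theorem Prod.isNilpotent_of_fst_of_snd {M N : Type*} [MonoidWithZero M] [MonoidWithZero N]
    {x : M × N} (h₁ : IsNilpotent x.1) (h₂ : IsNilpotent x.2) : IsNilpotent x := by
  obtain ⟨m, hm⟩ := h₁
  obtain ⟨n, hn⟩ := h₂
  exact ⟨m + n, Prod.ext (by simp [pow_add, hm]) (by simp [pow_add, hn])⟩

theorem TwoSidedIdeal.ringCon_mk'_eq_zero_iff {R : Type*} [Ring R] {I : TwoSidedIdeal R}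
    {x : R} : I.ringCon.mk' x = 0 ↔ x ∈ I := by
  rw [← mem_ker, ker_ringCon_mk']

structure IsReducedMulClosed {R : Type*} [Ring R] (S : Set R) : Prop where
  mul_mem : ∀ ⦃x⦄, x ∈ S → ∀ ⦃y⦄, y ∈ S → x * y ∈ S
  eq_zero_of_mul_self : ∀ ⦃x⦄, x ∈ S → x * x = 0 → x = 0

namespace IsReducedMulClosed

variable {R : Type*} [Ring R] {S : Set R}

theorem mul_eq_zero_swap (hS : IsReducedMulClosed S) {x y : R} (hx : x ∈ S) (hy : y ∈ S)
    (hxy : x * y = 0) : y * x = 0 :=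
  hS.eq_zero_of_mul_self (hS.mul_mem hy hx) <| by
    rw [mul_assoc, ← mul_assoc x, hxy, zero_mul, mul_zero]

theorem C_leadingCoeff_mul_eq_zero (hS : IsReducedMulClosed S) {F G : R[X]}
    (hF : ∀ i, F.coeff i ∈ S) (hG : ∀ j, G.coeff j ∈ S) (hFG : F * G = 0) :
    C F.leadingCoeff * G = 0 := by
  set a := F.leadingCoeff
  by_contra hH
  set j := (C a * G).natDegree
  have hab : a * G.coeff j ≠ 0 := by
    rw [← coeff_C_mul]; exact leadingCoeff_ne_zero.2 hH
  have hba : ∀ v, j < v → G.coeff v * a = 0 := fun v hv =>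
    hS.mul_eq_zero_swap (hF _) (hG v) <| by
      rw [← coeff_C_mul]; exact coeff_eq_zero_of_natDegree_lt hv
  have haba : a * G.coeff j * a = 0 := by
    have h0 : (F * G).coeff (F.natDegree + j) * a = 0 := by rw [hFG, coeff_zero, zero_mul]
    rwa [coeff_mul, Finset.sum_mul, Finset.sum_eq_single (F.natDegree, j)] at h0
    · rintro ⟨u, v⟩ huv hne
      rw [Finset.HasAntidiagonal.mem_antidiagonal] at huv
      rcases lt_trichotomy u F.natDegree with hu | rfl | hu
      · rw [mul_assoc, hba v (by omega), mul_zero]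
      · exact absurd (by simp only [Prod.mk.injEq, true_and]; omega) hne
      · rw [coeff_eq_zero_of_natDegree_lt hu, zero_mul, zero_mul]
    · intro h; simp at h
  exact hab <| hS.eq_zero_of_mul_self (hS.mul_mem (hF _) (hG _)) <| by
    rw [← mul_assoc, haba, zero_mul]

theorem C_coeff_mul_eq_zero (hS : IsReducedMulClosed S) {G : R[X]} (hG : ∀ j, G.coeff j ∈ S) :
    ∀ F : R[X], (∀ i, F.coeff i ∈ S) → F * G = 0 → ∀ i, C (F.coeff i) * G = 0 := by
  intro F
  induction hcard : F.support.card using Nat.strong_induction_on generalizing F with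
  | _ n ih =>
  intro hF hFG i
  by_cases hF0 : F = 0
  · simp [hF0]
  have hlead := hS.C_leadingCoeff_mul_eq_zero hF hG hFG
  have hmono : C F.leadingCoeff * X ^ F.natDegree * G = 0 := by
    rw [mul_assoc, X_pow_mul, ← mul_assoc, hlead, zero_mul]
  rw [← F.eraseLead_add_C_mul_X_pow, add_mul, hmono, add_zero] at hFG
  by_cases hi : i = F.natDegree
  · rw [hi]; exact hlead
  have hzero : (0 : R) ∈ S := by
    simpa only [coeff_eq_zero_of_natDegree_lt (Nat.lt_succ_self _)] using hF (F.natDegree + 1)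
  have hF' : ∀ k, F.eraseLead.coeff k ∈ S := fun k => by
    rw [eraseLead_coeff]; split_ifs
    exacts [hzero, hF k]
  rw [← eraseLead_coeff_of_ne i hi]
  exact ih _ (hcard ▸ eraseLead_support_card_lt hF0) _ rfl hF' hFG i

theorem coeff_mul_coeff_eq_zero (hS : IsReducedMulClosed S) {F G : R[X]}
    (hF : ∀ i, F.coeff i ∈ S) (hG : ∀ j, G.coeff j ∈ S) (hFG : F * G = 0) (i j : ℕ) :
    F.coeff i * G.coeff j = 0 := by
  rw [← coeff_C_mul, hS.C_coeff_mul_eq_zero hG F hF hFG i, coeff_zero]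

end IsReducedMulClosed

def TwoSidedIdeal.IsSemicommutative {R : Type*} [Ring R] (J : TwoSidedIdeal R) : Prop :=
  ∀ a ∈ J, ∀ b ∈ J, a * b = 0 → ∀ c ∈ J, a * c * b = 0

namespace TwoSidedIdeal.IsSemicommutative

variable {B : Type*} [Ring B] {J : TwoSidedIdeal B}

theorem pow_mul_prod_eq_zero [DecidableEq B] (hJ : J.IsSemicommutative) {x : B} (hx : x ∈ J) :
    ∀ l : List B, (∀ z ∈ l, z ∈ J) → ∀ r : ℕ,
      x ^ (r + l.count x) = 0 → x ^ r * l.prod = 0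
  | [], _, r, h => by simpa using h
  | y :: t, hl, r, h => by
    obtain ⟨hy, ht⟩ := List.forall_mem_cons.1 hl
    by_cases hyx : y = x
    · subst hyx
      rw [List.prod_cons, ← mul_assoc, ← pow_succ]
      exact pow_mul_prod_eq_zero hJ hx t ht (r + 1) (by
        rwa [List.count_cons_self, ← add_assoc, add_right_comm] at h)
    · have ih := pow_mul_prod_eq_zero hJ hx t ht r (by simpa [List.count_cons, hyx] using h)
      rw [List.prod_cons, ← mul_assoc]
      rcases r with _ | r
      · rw [pow_zero, one_mul] at ih
        rw [ih, mul_zero]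
      rcases t with _ | ⟨z, t⟩
      · rw [List.prod_nil, mul_one] at ih
        rw [ih, zero_mul, zero_mul]
      have hprod : (z :: t).prod ∈ J := by
        rw [List.prod_cons]; exact J.mul_mem_right _ _ (List.forall_mem_cons.1 ht).1
      have hpow : x ^ (r + 1) ∈ J := by rw [pow_succ]; exact J.mul_mem_left _ _ hx
      exact hJ _ hpow _ hprod ih y hy

theorem prod_eq_zero_of_le_count [DecidableEq B] (hJ : J.IsSemicommutative) {x : B} (hx : x ∈ J)
    {m : ℕ} (hxm : x ^ m = 0) {l : List B} (hl : ∀ z ∈ l, z ∈ J) (hm : m ≤ l.count x) :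
    l.prod = 0 := by
  simpa using hJ.pow_mul_prod_eq_zero hx l hl 0 (by rw [zero_add]; exact pow_eq_zero_of_le hm hxm)

theorem mul_pow_eq_zero (hJ : J.IsSemicommutative) {x c : B} (hx : x ∈ J) (hc : c ∈ J) {m : ℕ}
    (hxm : x ^ m = 0) : (x * c) ^ m = 0 := by
  classical
  suffices key : ∀ k (l : List B), (∀ z ∈ l, z ∈ J) →
      m ≤ k + l.count x → (x * c) ^ k * l.prod = 0 by
    simpa using key m [] (by simp) (by simp)
  intro k
  induction k with
  | zero =>
    intro l hl hm
    rw [hJ.prod_eq_zero_of_le_count hx hxm hl (by omega), mul_zero]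
  | succ k ih =>
    intro l hl hm
    have hxcl : ∀ z ∈ x :: c :: l, z ∈ J :=
      List.forall_mem_cons.2 ⟨hx, List.forall_mem_cons.2 ⟨hc, hl⟩⟩
    have hcount : l.count x + 1 ≤ (x :: c :: l).count x := by
      rw [List.count_cons_self]; exact Nat.succ_le_succ List.count_le_count_cons
    simpa [pow_succ, mul_assoc] using ih (x :: c :: l) hxcl (by omega)

theorem isNilpotent_mul_right (hJ : J.IsSemicommutative) {x : B} (hx : x ∈ J)
    (hnil : IsNilpotent x) (r : B) : IsNilpotent (x * r) := by
  obtain ⟨m, hm⟩ := hnil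
  refine ⟨2 * m, ?_⟩
  rw [pow_mul, sq, show x * r * (x * r) = x * (r * x * r) by simp only [mul_assoc]]
  exact hJ.mul_pow_eq_zero hx (J.mul_mem_right _ _ (J.mul_mem_left _ _ hx)) hm

theorem add_pow_eq_zero (hJ : J.IsSemicommutative) {x y : B} (hx : x ∈ J) (hy : y ∈ J)
    {m n : ℕ} (hxm : x ^ m = 0) (hyn : y ^ n = 0) : (x + y) ^ (m + n) = 0 := by
  classical
  have hword : ∀ l : List B, (∀ z ∈ l, z ∈ J) →
      m ≤ l.count x ∨ n ≤ l.count y → l.prod = 0 := by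
    rintro l hl (h | h)
    exacts [hJ.prod_eq_zero_of_le_count hx hxm hl h, hJ.prod_eq_zero_of_le_count hy hyn hl h]
  -- `(x + y) ^ k * l.prod` is a sum of words `w ++ l` with `w` of length `k` in `x, y`; the bound
  -- forces each of them to contain `m` letters `x` or `n` letters `y`
  suffices key : ∀ k (l : List B), (∀ z ∈ l, z ∈ J) →
      m - l.count x + (n - l.count y) ≤ k + 1 → (x + y) ^ k * l.prod = 0 by
    simpa using key (m + n) [] (by simp) (by omega)
  intro k
  induction k with
  | zero =>
    intro l hl hk
    rw [hword l hl (by omega), mul_zero]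
  | succ k ih =>
    intro l hl hk
    by_cases h : m ≤ l.count x ∨ n ≤ l.count y
    · rw [hword l hl h, mul_zero]
    have h₁ := ih (x :: l) (List.forall_mem_cons.2 ⟨hx, hl⟩) (by
      have := @List.count_le_count_cons _ _ y x l
      rw [List.count_cons_self]; omega)
    have h₂ := ih (y :: l) (List.forall_mem_cons.2 ⟨hy, hl⟩) (by
      have := @List.count_le_count_cons _ _ x y l
      rw [List.count_cons_self]; omega)
    rw [List.prod_cons] at h₁ h₂
    rw [pow_succ, mul_assoc, add_mul, mul_add, h₁, h₂, add_zero]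

def nilIdeal (hJ : J.IsSemicommutative) : TwoSidedIdeal B :=
  .mk' {x | x ∈ J ∧ IsNilpotent x} ⟨J.zero_mem, .zero⟩
    (fun ⟨hx, m, hm⟩ ⟨hy, n, hn⟩ =>
      ⟨J.add_mem hx hy, m + n, hJ.add_pow_eq_zero hx hy hm hn⟩)
    (fun ⟨hx, hnil⟩ => ⟨J.neg_mem hx, hnil.neg⟩)
    (fun ⟨hy, hnil⟩ =>
      ⟨J.mul_mem_left _ _ hy, isNilpotent_mul_comm (hJ.isNilpotent_mul_right hy hnil _)⟩)
    (fun ⟨hx, hnil⟩ => ⟨J.mul_mem_right _ _ hx, hJ.isNilpotent_mul_right hx hnil _⟩)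

theorem mem_nilIdeal (hJ : J.IsSemicommutative) {x : B} :
    x ∈ hJ.nilIdeal ↔ x ∈ J ∧ IsNilpotent x :=
  TwoSidedIdeal.mem_mk' ..

theorem mem_nilIdeal_of_isNilpotent_mk' (hJ : J.IsSemicommutative) {x : B} (hx : x ∈ J)
    (h : IsNilpotent (hJ.nilIdeal.ringCon.mk' x)) : x ∈ hJ.nilIdeal := by
  obtain ⟨k, hk⟩ := h
  rw [← map_pow, ringCon_mk'_eq_zero_iff, mem_nilIdeal] at hk
  exact hJ.mem_nilIdeal.2 ⟨hx, hk.2.of_pow⟩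

theorem isReducedMulClosed_image_mk' (hJ : J.IsSemicommutative) :
    IsReducedMulClosed (hJ.nilIdeal.ringCon.mk' '' J) where
  mul_mem := by
    rintro _ ⟨a, -, rfl⟩ _ ⟨b, hb, rfl⟩
    exact ⟨a * b, J.mul_mem_left _ _ hb, map_mul _ _ _⟩
  eq_zero_of_mul_self := by
    rintro _ ⟨a, ha, rfl⟩ h
    exact ringCon_mk'_eq_zero_iff.2 (hJ.mem_nilIdeal_of_isNilpotent_mk' ha ⟨2, by rw [sq, h]⟩)

theorem isNilpotent_coeff_mul_coeff (hJ : J.IsSemicommutative) {P Q : B[X]} (hPQ : P * Q = 0)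
    {i j m : ℕ} (hm : (P.coeff i * Q.coeff j) ^ m ∈ J) :
    IsNilpotent (P.coeff i * Q.coeff j) := by
  set π := hJ.nilIdeal.ringCon.mk'
  set t := P.coeff i * Q.coeff j
  have hsandwich : C (π (t ^ m)) * P.map π * (Q.map π * C (π (t ^ m))) = 0 := by
    rw [mul_assoc, ← mul_assoc (P.map π), ← Polynomial.map_mul, hPQ, Polynomial.map_zero,
      zero_mul, mul_zero]
  have key := hJ.isReducedMulClosed_image_mk'.coeff_mul_coeff_eq_zero
    (fun k => ⟨t ^ m * P.coeff k, J.mul_mem_right _ _ hm, by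
      rw [coeff_C_mul, coeff_map, map_mul]⟩)
    (fun k => ⟨Q.coeff k * t ^ m, J.mul_mem_left _ _ hm, by
      rw [coeff_mul_C, coeff_map, map_mul]⟩)
    hsandwich i j
  rw [coeff_C_mul, coeff_mul_C, coeff_map, coeff_map, ← map_mul, ← map_mul, ← map_mul,
    ringCon_mk'_eq_zero_iff, show t ^ m * P.coeff i * (Q.coeff j * t ^ m) = t ^ (m + 1 + m) by
      rw [pow_add, pow_succ]; simp only [t, mul_assoc]] at key
  exact (hJ.mem_nilIdeal.1 key).2.of_pow

end TwoSidedIdeal.IsSemicommutative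

namespace amalgamation

variable {A B : Type*} [Ring A] [Ring B] {f : A →+* B} {J : TwoSidedIdeal B}

theorem pow_snd_mem_of_pow_fst_eq_zero (x : amalgamation f J) {m : ℕ}
    (hm : (x : A × B).1 ^ m = 0) : (x : A × B).2 ^ m ∈ J := by
  have hpow : ((x ^ m : amalgamation f J) : A × B).2
      - f ((x ^ m : amalgamation f J) : A × B).1 ∈ J := (x ^ m).2
  simpa [hm] using hpow

theorem isNilpotent_of_fst_of_snd {x : amalgamation f J} (h₁ : IsNilpotent (x : A × B).1)
    (h₂ : IsNilpotent (x : A × B).2) : IsNilpotent x :=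
  (IsNilpotent.map_iff (amalgamation f J).subtype_injective).1
    (Prod.isNilpotent_of_fst_of_snd h₁ h₂)

end amalgamation

theorem stmt_18_general {A B : Type*} [Ring A] [Ring B] (f : A →+* B) (J : TwoSidedIdeal B)
    (hJsc : ∀ a ∈ J, ∀ b ∈ J, a * b = 0 → ∀ c ∈ J, a * c * b = 0)
    (hA : IsWeakArmendariz A) :
    IsWeakArmendariz (amalgamation f J) := by
  intro p q hpq i j
  let πA : amalgamation f J →+* A := (RingHom.fst A B).comp (amalgamation f J).subtype
  let πB : amalgamation f J →+* B := (RingHom.snd A B).comp (amalgamation f J).subtype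
  have hfst : IsNilpotent (πA (p.coeff i * q.coeff j)) := by
    simpa only [coeff_map, map_mul] using
      hA (p.map πA) (q.map πA) (by rw [← Polynomial.map_mul, hpq, Polynomial.map_zero]) i j
  obtain ⟨m, hm⟩ := hfst
  have hsnd : IsNilpotent (πB (p.coeff i * q.coeff j)) := by
    have hsnd_mem := amalgamation.pow_snd_mem_of_pow_fst_eq_zero (p.coeff i * q.coeff j) hm
    simpa only [coeff_map, map_mul] using
      TwoSidedIdeal.IsSemicommutative.isNilpotent_coeff_mul_coeff hJsc (P := p.map πB)
        (Q := q.map πB) (by rw [← Polynomial.map_mul, hpq, Polynomial.map_zero])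
        (by rw [coeff_map, coeff_map, ← map_mul]; exact hsnd_mem)
  exact amalgamation.isNilpotent_of_fst_of_snd (x := p.coeff i * q.coeff j) ⟨m, hm⟩ hsnd

theorem stmt_18 {A B : Type*} [Ring A] [Ring B] (f : A →+* B) (J : TwoSidedIdeal B)
    (hJ : (1 : B) ∉ J)
    (hJsc : ∀ a ∈ J, ∀ b ∈ J, a * b = 0 → ∀ c ∈ J, a * c * b = 0)
    (hA : IsWeakArmendariz A) :
    IsWeakArmendariz (amalgamation f J) :=
  stmt_18_general f J hJsc hA
end
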